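/- arXiv:2011.05415 — 4 statements merged into one kernel-verified Lean document; each statement's English description precedes it below -/
import Mathlib

section
/- For a prime p, a positive integer n, and a quadratic form Q over ℚ_p in n variables, the quotient set R(Q(ℕ^n)) is dense in ℚ_p if and only if R(Q(ℤ^n)) is dense in ℚ_p. -/
/-!
Every integer is a `p`-adic limit of natural numbers (e.g. of its residues modulo `p ^ k`),
so by continuity of `Q` every value `Q(v)`, `v ∈ ℤ^n`, is a limit of values on `ℕ^n`, and by
continuity of division every quotient of values on `ℤ^n` is a limit of quotients of values on
`ℕ^n`. Hence `R(Q(ℤ^n))` lies in the closure of `R(Q(ℕ^n))`; the converse inclusion is trivial.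
-/

open Set

def quotSet {K : Type*} [DivisionRing K] (A : Set K) : Set K :=
  {x | ∃ a ∈ A, ∃ b ∈ A, b ≠ 0 ∧ x = a / b}

section QuotSet

variable {K : Type*} [DivisionRing K]

theorem quotSet_mono {A B : Set K} (h : A ⊆ B) : quotSet A ⊆ quotSet B := by
  rintro x ⟨a, ha, b, hb, hb0, rfl⟩
  exact ⟨a, h ha, b, h hb, hb0, rfl⟩

theorem quotSet_subset_closure_quotSet [TopologicalSpace K] [ContinuousMul K]
    [ContinuousInv₀ K] [T1Space K] {A B : Set K} (h : A ⊆ closure B) :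
    quotSet A ⊆ closure (quotSet B) := by
  rintro x ⟨a, ha, b, hb, hb0, rfl⟩
  have hab : (a, b) ∈ closure (B ×ˢ ({0}ᶜ ∩ B)) := by
    rw [closure_prod_eq]
    exact ⟨h ha, isOpen_compl_singleton.inter_closure ⟨hb0, h hb⟩⟩
  have hdiv : ContinuousAt (fun z : K × K => z.1 / z.2) (a, b) :=
    continuousAt_fst.div continuousAt_snd hb0
  refine closure_mono ?_ (hdiv.continuousWithinAt.mem_closure_image hab)
  rintro _ ⟨⟨c, d⟩, ⟨hc, hd0, hd⟩, rfl⟩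
  exact ⟨c, hc, d, hd, hd0, rfl⟩

end QuotSet

theorem QuadraticMap.continuous_of_finiteDimensional {𝕜 E F : Type*}
    [NontriviallyNormedField 𝕜] [CompleteSpace 𝕜]
    [NormedAddCommGroup E] [NormedSpace 𝕜 E] [FiniteDimensional 𝕜 E]
    [NormedAddCommGroup F] [NormedSpace 𝕜 F] (Q : QuadraticMap 𝕜 E F) : Continuous Q := by
  obtain ⟨B, rfl⟩ := LinearMap.BilinMap.toQuadraticMap_surjective Q
  exact (B.toContinuousBilinearMap.continuous.clm_apply continuous_id :)

namespace Padic

variable {p : ℕ} [Fact p.Prime]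

theorem intCast_mem_closure_range_natCast (z : ℤ) :
    (z : ℚ_[p]) ∈ closure (range ((↑) : ℕ → ℚ_[p])) :=
  map_mem_closure (f := ((↑) : ℤ_[p] → ℚ_[p])) continuous_subtype_val
    (PadicInt.denseRange_natCast (z : ℤ_[p])) (by rintro _ ⟨m, rfl⟩; exact ⟨m, rfl⟩)

theorem apply_intCast_mem_closure_range {ι X : Type*} [TopologicalSpace X]
    {f : (ι → ℚ_[p]) → X} (hf : Continuous f) (v : ι → ℤ) :
    f (fun i => (v i : ℚ_[p])) ∈ closure (range fun w : ι → ℕ => f fun i => (w i : ℚ_[p])) := by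
  have hv : (fun i => (v i : ℚ_[p])) ∈ closure (univ.pi fun _ => range ((↑) : ℕ → ℚ_[p])) := by
    rw [closure_pi_set]
    exact fun i _ => intCast_mem_closure_range_natCast (v i)
  refine map_mem_closure hf hv fun x hx => ?_
  choose w hw using fun i => hx i (mem_univ i)
  exact ⟨w, by simp only [hw]⟩

end Padic

theorem stmt0_general (p : ℕ) [Fact p.Prime] (n : ℕ)
    (Q : QuadraticForm ℚ_[p] (Fin n → ℚ_[p])) :
    Dense (quotSet {y : ℚ_[p] | ∃ v : Fin n → ℕ, Q (fun i => (v i : ℚ_[p])) = y}) ↔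
    Dense (quotSet {y : ℚ_[p] | ∃ v : Fin n → ℤ, Q (fun i => (v i : ℚ_[p])) = y}) := by
  have hnat_int : {y : ℚ_[p] | ∃ v : Fin n → ℕ, Q (fun i => (v i : ℚ_[p])) = y} ⊆
      {y | ∃ v : Fin n → ℤ, Q (fun i => (v i : ℚ_[p])) = y} := by
    rintro _ ⟨v, rfl⟩
    exact ⟨fun i => v i, by simp only [Int.cast_natCast]⟩
  have hint_nat : {y : ℚ_[p] | ∃ v : Fin n → ℤ, Q (fun i => (v i : ℚ_[p])) = y} ⊆
      closure {y | ∃ v : Fin n → ℕ, Q (fun i => (v i : ℚ_[p])) = y} := by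
    rintro _ ⟨v, rfl⟩
    exact Padic.apply_intCast_mem_closure_range Q.continuous_of_finiteDimensional v
  exact ⟨fun h => h.mono (quotSet_mono hnat_int),
    fun h => dense_closure.mp (h.mono (quotSet_subset_closure_quotSet hint_nat))⟩

theorem stmt0 (p : ℕ) [Fact p.Prime] (n : ℕ) (hn : 0 < n)
    (Q : QuadraticForm ℚ_[p] (Fin n → ℚ_[p])) :
    Dense (quotSet {y : ℚ_[p] | ∃ v : Fin n → ℕ, Q (fun i => (v i : ℚ_[p])) = y}) ↔
    Dense (quotSet {y : ℚ_[p] | ∃ v : Fin n → ℤ, Q (fun i => (v i : ℚ_[p])) = y}) :=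
  stmt0_general p n Q
end

section
/- If Q is a nonsingular isotropic quadratic form over ℚ_p in n variables, then R(Q(ℤ_p^n)) = ℚ_p; in particular R(Q(ℤ^n)) is dense in ℚ_p. -/
/-!
If `Q x = 0` with `x ≠ 0`, nonsingularity gives `y` with `polar Q x y ≠ 0`, and then
`t ↦ Q (t • x + y) = Q y + t * polar Q x y` is a nonconstant affine function, so `Q` takes every
value. Any `c` is then `Q v / Q u` with `Q u = 1`; scaling `u` and `v` by a common power of `p`
makes both integral without changing the quotient. Finally `(u, v) ↦ Q u / Q v` is continuous
where `Q v ≠ 0` and `ℤ` is dense in `ℤ_[p]`, so these quotients are limits of quotients of values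
of `Q` at integer vectors.
-/

open Filter Topology Set

namespace QuadraticMap

theorem surjective_of_polar_ne_zero {K M : Type*} [Field K] [AddCommGroup M] [Module K M]
    (Q : QuadraticForm K M) {x y : M} (hx : Q x = 0) (hxy : polar Q x y ≠ 0) :
    Function.Surjective Q := by
  have hline (t : K) : Q (t • x + y) = Q y + t * polar Q x y := by
    have h := Q.polar_smul_left t x y
    rw [polar, QuadraticMap.map_smul, hx, smul_zero, smul_eq_mul] at h
    linear_combination h
  intro c
  refine ⟨((c - Q y) / polar Q x y) • x + y, ?_⟩
  rw [hline, div_mul_cancel₀ _ hxy]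
  ring

theorem surjective_of_isotropic {K M : Type*} [Field K] [AddCommGroup M] [Module K M]
    (Q : QuadraticForm K M) (hns : ∀ x, (∀ y, polar Q x y = 0) → x = 0) {x : M}
    (hx0 : x ≠ 0) (hx : Q x = 0) : Function.Surjective Q := by
  obtain ⟨y, hy⟩ := not_forall.mp (mt (hns x) hx0)
  exact Q.surjective_of_polar_ne_zero hx hy

theorem continuous_of_finite {R M : Type*} [CommRing R] [TopologicalSpace R]
    [IsTopologicalRing R] [AddCommGroup M] [Module R M] [Module.Free R M] [Module.Finite R M]
    [TopologicalSpace M] [IsModuleTopology R M] (Q : QuadraticForm R M) : Continuous Q := by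
  obtain ⟨B, rfl⟩ := LinearMap.BilinMap.toQuadraticMap_surjective Q
  exact (IsModuleTopology.continuous_bilinear_of_finite_left B).comp
    (continuous_id.prodMk continuous_id)

end QuadraticMap

theorem quotSet_range_subset_closure_of_denseRange {K X Y : Type*} [Field K] [TopologicalSpace K]
    [T1Space K] [ContinuousInv₀ K] [ContinuousMul K] [TopologicalSpace X] {q : X → K}
    (hq : Continuous q) {e : Y → X} (he : DenseRange e) :
    quotSet (range q) ⊆ closure (quotSet (range (q ∘ e))) := by
  rintro _ ⟨_, ⟨x, rfl⟩, _, ⟨y, rfl⟩, hy, rfl⟩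
  rw [mem_closure_iff_nhds]
  intro N hN
  let F : X × X → K := fun z => q z.1 / q z.2
  have hU : F ⁻¹' N ∩ (fun z : X × X => q z.2) ⁻¹' {t | t ≠ 0} ∈ 𝓝 (x, y) :=
    inter_mem ((hq.fst'.continuousAt.div hq.snd'.continuousAt hy).preimage_mem_nhds hN)
      (hq.snd'.continuousAt.preimage_mem_nhds (isOpen_ne.mem_nhds hy : {t : K | t ≠ 0} ∈ 𝓝 _))
  obtain ⟨⟨s, t⟩, hst⟩ := (he.prodMap he).mem_nhds hU
  exact ⟨F (e s, e t), hst.1, _, ⟨s, rfl⟩, _, ⟨t, rfl⟩, hst.2, rfl⟩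

namespace Padic

variable {p : ℕ} [Fact p.Prime]

theorem eventually_pow_smul_mem_range_coe {ι : Type*} [Finite ι] (v : ι → ℚ_[p]) :
    ∀ᶠ k in atTop, (p : ℚ_[p]) ^ k • v ∈ range fun (w : ι → ℤ_[p]) i => (w i : ℚ_[p]) := by
  have hopen : IsOpen (range fun (w : ι → ℤ_[p]) i => (w i : ℚ_[p])) := by
    rw [show (fun (w : ι → ℤ_[p]) i => (w i : ℚ_[p])) =
      Pi.map fun (_ : ι) (a : ℤ_[p]) => (a : ℚ_[p]) from rfl, range_piMap]
    exact isOpen_set_pi finite_univ fun _ _ =>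
      (PadicInt.isOpenEmbedding_coe (p := p)).isOpen_range
  have htend : Tendsto (fun k : ℕ => (p : ℚ_[p]) ^ k • v) atTop (𝓝 0) := by
    simpa using (tendsto_pow_atTop_nhds_zero_of_norm_lt_one (norm_p_lt_one (p := p))).smul_const v
  exact htend (hopen.mem_nhds ⟨(0 : ι → ℤ_[p]), funext fun _ => PadicInt.coe_zero⟩)

theorem quotSet_range_padicInt_eq_univ {ι : Type*} [Finite ι]
    {Q : QuadraticForm ℚ_[p] (ι → ℚ_[p])} (hQ : Function.Surjective Q) :
    quotSet (range fun w : ι → ℤ_[p] => Q fun i => (w i : ℚ_[p])) = univ := by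
  refine eq_univ_of_forall fun c => ?_
  obtain ⟨v, rfl⟩ := hQ c
  obtain ⟨u, hu⟩ := hQ 1
  obtain ⟨k, ⟨w, hw⟩, ⟨z, hz⟩⟩ :=
    ((eventually_pow_smul_mem_range_coe v).and (eventually_pow_smul_mem_range_coe u)).exists
  have hpk : (p : ℚ_[p]) ^ k ≠ 0 := pow_ne_zero _ (Nat.cast_ne_zero.2 (Fact.out : p.Prime).ne_zero)
  refine ⟨_, ⟨w, rfl⟩, _, ⟨z, rfl⟩, ?_, ?_⟩ <;>
    simp only [hw, hz, QuadraticMap.map_smul, hu, smul_eq_mul, mul_one]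
  · exact mul_ne_zero hpk hpk
  · field_simp

end Padic

theorem stmt3 (p : ℕ) [Fact p.Prime] (n : ℕ)
    (Q : QuadraticForm ℚ_[p] (Fin n → ℚ_[p]))
    (hns : ∀ x : Fin n → ℚ_[p], (∀ y, QuadraticMap.polar (⇑Q) x y = 0) → x = 0)
    (hiso : ∃ x : Fin n → ℚ_[p], x ≠ 0 ∧ Q x = 0) :
    quotSet {y : ℚ_[p] | ∃ v : Fin n → ℤ_[p], Q (fun i => (v i : ℚ_[p])) = y} = Set.univ ∧
    Dense (quotSet {y : ℚ_[p] | ∃ v : Fin n → ℤ, Q (fun i => (v i : ℚ_[p])) = y}) := by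
  obtain ⟨x, hx0, hQx⟩ := hiso
  have hrange := Padic.quotSet_range_padicInt_eq_univ (Q.surjective_of_isotropic hns hx0 hQx)
  refine ⟨hrange, ?_⟩
  have hq : Continuous fun v : Fin n → ℤ_[p] => Q fun i => (v i : ℚ_[p]) :=
    Q.continuous_of_finite.comp (continuous_pi fun i =>
      PadicInt.isOpenEmbedding_coe.continuous.comp (continuous_apply i))
  have hdense : DenseRange fun (v : Fin n → ℤ) i => (v i : ℤ_[p]) :=
    DenseRange.piMap fun _ => PadicInt.denseRange_intCast
  have hclosure := quotSet_range_subset_closure_of_denseRange hq hdense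
  rw [hrange, univ_subset_iff] at hclosure
  exact dense_iff_closure_eq.mpr hclosure
end

section
/- Let p be an odd prime and Q = aX₁² + bX₁X₂ + cX₂² ∈ ℤ[X₁, X₂] a nonsingular binary quadratic form. Then R(Q(ℤ²)) is dense in ℚ_p if and only if ν_p(b² − 4ac) is even and the Legendre symbol of p^{−ν_p(b²−4ac)}(b² − 4ac) modulo p equals 1. -/
theorem exists_quadratic_form_eq_of_discrim_eq_mul_self {K : Type*} [Field K] [NeZero (2 : K)]
    {a b c r : K} (hr : discrim a b c = r * r) (hD : discrim a b c ≠ 0) (z : K) :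
    ∃ x y, a * x ^ 2 + b * x * y + c * y ^ 2 = z := by
  rw [discrim] at hr hD
  by_cases ha : a = 0
  · have hb : b ≠ 0 := by rintro rfl; simp [ha] at hD
    exact ⟨(z - c) / b, 1, by field_simp; ring_nf; simp [ha]⟩
  · have hr₀ : r ≠ 0 := by rintro rfl; exact hD (by linear_combination hr)
    -- `4a Q(x, y) = (2ax + (b - r)y)(2ax + (b + r)y)`: make the first factor `1`
    refine ⟨(1 - (b - r) * ((4 * a * z - 1) / (2 * r))) / (2 * a), (4 * a * z - 1) / (2 * r), ?_⟩
    field_simp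
    linear_combination -(4 * a * z - 1) ^ 2 * hr

theorem exists_sq_sub_discrim_mul_sq_eq_div {K : Type*} [Field K] [NeZero (2 : K)] {a b c : K}
    (ha : a ≠ 0) {m k m' k' : K} (h : a * m' ^ 2 + b * m' * k' + c * k' ^ 2 ≠ 0) :
    ∃ x y, x ^ 2 - discrim a b c * y ^ 2 =
      (a * m ^ 2 + b * m * k + c * k ^ 2) / (a * m' ^ 2 + b * m' * k' + c * k' ^ 2) := by
  have hE : 4 * a * (a * m' ^ 2 + b * m' * k' + c * k' ^ 2) ≠ 0 := by
    rw [show (4 : K) = 2 * 2 by norm_num]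
    exact mul_ne_zero (mul_ne_zero (mul_ne_zero two_ne_zero two_ne_zero) ha) h
  -- the norm of `(2am + bk + k√D)(2am' + bk' - k'√D)`, divided by the square of the norm of
  -- `2am' + bk' + k'√D`, which is `4a Q(m', k')`
  refine ⟨((2 * a * m + b * k) * (2 * a * m' + b * k') - discrim a b c * k * k') /
      (4 * a * (a * m' ^ 2 + b * m' * k' + c * k' ^ 2)),
    (k * (2 * a * m' + b * k') - (2 * a * m + b * k) * k') /
      (4 * a * (a * m' ^ 2 + b * m' * k' + c * k' ^ 2)), ?_⟩
  rw [div_pow, div_pow, mul_div_assoc', div_sub_div_same, div_eq_div_iff (pow_ne_zero 2 hE) h,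
    discrim]
  ring

theorem quotSet_subset_sq_sub_mul_sq {K : Type*} [Field K] [CharZero K] {a b c : ℤ}
    (ha : a ≠ 0) :
    quotSet {z : K | ∃ m k : ℤ, ((a * m ^ 2 + b * m * k + c * k ^ 2 : ℤ) : K) = z} ⊆
      {z | ∃ x y, x ^ 2 - ((b ^ 2 - 4 * a * c : ℤ) : K) * y ^ 2 = z} := by
  rintro _ ⟨_, ⟨m, k, rfl⟩, _, ⟨m', k', rfl⟩, h, rfl⟩
  push_cast at h ⊢
  simpa [discrim] using exists_sq_sub_discrim_mul_sq_eq_div (Int.cast_ne_zero.2 ha) h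

theorem exists_quadratic_form_ne_zero {a b c : ℤ} (hD : b ^ 2 - 4 * a * c ≠ 0) :
    ∃ m k : ℤ, a * m ^ 2 + b * m * k + c * k ^ 2 ≠ 0 := by
  by_contra! h
  have ha := h 1 0
  have hc := h 0 1
  have hb := h 1 1
  norm_num at ha hc
  simp only [ha, hc, one_pow, mul_one, zero_add, add_zero] at hb
  exact hD (by simp [ha, hb, hc])

theorem div_mem_quotSet_of_rat {K : Type*} [Field K] [CharZero K] {a b c m₀ k₀ : ℤ}
    (h₀ : a * m₀ ^ 2 + b * m₀ * k₀ + c * k₀ ^ 2 ≠ 0) (x y : ℚ) :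
    ((a : K) * x ^ 2 + b * x * y + c * y ^ 2) / ((a * m₀ ^ 2 + b * m₀ * k₀ + c * k₀ ^ 2 : ℤ) : K) ∈
      quotSet {z : K | ∃ m k : ℤ, ((a * m ^ 2 + b * m * k + c * k ^ 2 : ℤ) : K) = z} := by
  have hN : (x.den * y.den : ℤ) ≠ 0 := by positivity
  refine ⟨_, ⟨x.num * y.den, y.num * x.den, rfl⟩, _,
    ⟨x.den * y.den * m₀, x.den * y.den * k₀, rfl⟩, ?_, ?_⟩
  · rw [Int.cast_ne_zero]
    convert mul_ne_zero (pow_ne_zero 2 hN) h₀ using 1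
    ring
  · have hx : (x.den : K) ≠ 0 := Nat.cast_ne_zero.2 x.den_nz
    have hy : (y.den : K) ≠ 0 := Nat.cast_ne_zero.2 y.den_nz
    have h₀' : ((a * m₀ ^ 2 + b * m₀ * k₀ + c * k₀ ^ 2 : ℤ) : K) ≠ 0 := Int.cast_ne_zero.2 h₀
    push_cast at h₀' ⊢
    rw [Rat.cast_def x, Rat.cast_def y]
    field_simp

theorem dense_quotSet_of_isSquare_discrim {K : Type*} [Field K] [TopologicalSpace K]
    [IsTopologicalRing K] [CharZero K] (hℚ : DenseRange ((↑) : ℚ → K)) {a b c : ℤ}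
    (hD : b ^ 2 - 4 * a * c ≠ 0) (hsq : IsSquare ((b ^ 2 - 4 * a * c : ℤ) : K)) :
    Dense (quotSet {z : K | ∃ m k : ℤ, ((a * m ^ 2 + b * m * k + c * k ^ 2 : ℤ) : K) = z}) := by
  obtain ⟨m₀, k₀, h₀⟩ := exists_quadratic_form_ne_zero hD
  set q₀ : K := ((a * m₀ ^ 2 + b * m₀ * k₀ + c * k₀ ^ 2 : ℤ) : K)
  have hq₀ : q₀ ≠ 0 := Int.cast_ne_zero.2 h₀
  set g : K × K → K := fun v => ((a : K) * v.1 ^ 2 + b * v.1 * v.2 + c * v.2 ^ 2) / q₀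
  have hg : Function.Surjective g := by
    intro z
    obtain ⟨r, hr⟩ := hsq
    have hD' : discrim (a : K) b c ≠ 0 := by rw [discrim]; exact_mod_cast hD
    obtain ⟨x, y, hxy⟩ := exists_quadratic_form_eq_of_discrim_eq_mul_self
      (by rw [discrim]; exact_mod_cast hr) hD' (z * q₀)
    exact ⟨(x, y), by simp only [g, hxy, mul_div_cancel_right₀ _ hq₀]⟩
  refine Dense.mono ?_ (hg.denseRange.comp (hℚ.prodMap hℚ) (by fun_prop))
  rintro _ ⟨⟨x, y⟩, rfl⟩
  exact div_mem_quotSet_of_rat h₀ x y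

theorem PadicInt.norm_two_eq_one {p : ℕ} [Fact p.Prime] (hp : p ≠ 2) : ‖(2 : ℤ_[p])‖ = 1 := by
  simpa using PadicInt.norm_natCast_eq_one_iff.2 ((Nat.coprime_primes Fact.out Nat.prime_two).2 hp)

namespace Padic

variable {p : ℕ} [Fact p.Prime]

theorem natCast_p_ne_zero : (p : ℚ_[p]) ≠ 0 := Nat.cast_ne_zero.2 (NeZero.ne p)

theorem isSquare_of_norm_sub_one_lt_one (hp : p ≠ 2) {x : ℚ_[p]} (h : ‖x - 1‖ < 1) :
    IsSquare x := by
  have hx : ‖x‖ ≤ 1 := ((norm_eq_of_norm_sub_lt_right (by rwa [norm_one])).trans norm_one).le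
  set u : ℤ_[p] := ⟨x, hx⟩
  have hF : ‖(Polynomial.X ^ 2 - Polynomial.C u).aeval (1 : ℤ_[p])‖ <
      ‖(Polynomial.X ^ 2 - Polynomial.C u).derivative.aeval (1 : ℤ_[p])‖ ^ 2 := by
    have h₀ : (Polynomial.X ^ 2 - Polynomial.C u).aeval (1 : ℤ_[p]) = 1 - u := by simp
    have h₁ : (Polynomial.X ^ 2 - Polynomial.C u).derivative.aeval (1 : ℤ_[p]) = 2 := by
      simp [one_add_one_eq_two]
    rw [h₀, h₁, PadicInt.norm_two_eq_one hp, one_pow, norm_sub_rev]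
    exact h
  obtain ⟨z, hz, -⟩ := hensels_lemma hF
  simp only [map_sub, map_pow, Polynomial.aeval_X, Polynomial.aeval_C, Algebra.algebraMap_self,
    RingHom.id_apply, sub_eq_zero] at hz
  refine ⟨z, ?_⟩
  rw [← PadicInt.coe_mul, ← sq, hz]

theorem isSquare_div_of_norm_sub_lt (hp : p ≠ 2) {q t : ℚ_[p]} (h : ‖q - t‖ < ‖t‖) :
    IsSquare (q / t) := by
  have ht : 0 < ‖t‖ := (norm_nonneg _).trans_lt h
  apply isSquare_of_norm_sub_one_lt_one hp
  rwa [← div_self (norm_pos_iff.1 ht), ← sub_div, norm_div, div_lt_one ht]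

theorem isSquare_of_norm_sq_sub_lt (hp : p ≠ 2) {u x : ℚ_[p]} (h : ‖x ^ 2 - u‖ < ‖u‖) :
    IsSquare u := by
  have hu : u ≠ 0 := norm_pos_iff.1 ((norm_nonneg _).trans_lt h)
  have hx : x ≠ 0 := by rintro rfl; simp at h
  obtain ⟨r, hr⟩ := isSquare_div_of_norm_sub_lt hp h
  have hr₀ : r ≠ 0 := by rintro rfl; simp [hu, hx] at hr
  refine ⟨x / r, ?_⟩
  rw [div_eq_iff hu] at hr
  field_simp
  rw [hr]
  ring

theorem norm_sq_ne_norm_p_mul_norm_sq {x : ℚ_[p]} (hx : x ≠ 0) (y : ℚ_[p]) :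
    ‖x‖ ^ 2 ≠ ‖(p : ℚ_[p])‖ * ‖y‖ ^ 2 := by
  rcases eq_or_ne y 0 with rfl | hy
  · simpa using hx
  have hp : (1 : ℝ) < p := Nat.one_lt_cast.2 (Fact.out : p.Prime).one_lt
  rw [norm_eq_zpow_neg_valuation hx, norm_eq_zpow_neg_valuation hy, norm_p, ← zpow_natCast,
    ← zpow_natCast, ← zpow_mul, ← zpow_mul, ← zpow_neg_one, ← zpow_add₀ (by positivity)]
  intro h
  have := zpow_right_injective₀ (by positivity) hp.ne' h
  omega

theorem exists_norm_eq_one_and_eq_zpow_mul {x : ℚ_[p]} (hx : x ≠ 0) :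
    ∃ u : ℚ_[p], ‖u‖ = 1 ∧ x = (p : ℚ_[p]) ^ x.valuation * u := by
  refine ⟨(p : ℚ_[p]) ^ (-x.valuation) * x, ?_, ?_⟩
  · rw [norm_mul, norm_p_zpow, norm_eq_zpow_neg_valuation hx, neg_neg,
      ← zpow_add₀ (Nat.cast_ne_zero.2 (NeZero.ne p)), add_neg_cancel, zpow_zero]
  · rw [← mul_assoc, ← zpow_add₀ natCast_p_ne_zero, add_neg_cancel, zpow_zero, one_mul]

theorem norm_sq_sub_mul_sq_of_not_isSquare (hp : p ≠ 2) {u : ℚ_[p]} (hu : ‖u‖ = 1)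
    (hsq : ¬IsSquare u) (x y : ℚ_[p]) : ‖x ^ 2 - u * y ^ 2‖ = max (‖x‖ ^ 2) (‖y‖ ^ 2) := by
  have huy : ‖u * y ^ 2‖ = ‖y‖ ^ 2 := by rw [norm_mul, hu, one_mul, norm_pow]
  by_cases hxy : ‖x‖ = ‖y‖
  · rcases eq_or_ne y 0 with rfl | hy
    · simp_all
    have hT : ‖(x / y) ^ 2 - u‖ = 1 := by
      refine le_antisymm ?_ (not_lt.1 fun hlt => hsq (isSquare_of_norm_sq_sub_lt hp (hu ▸ hlt)))
      rw [sub_eq_add_neg]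
      refine (nonarchimedean _ _).trans (max_le ?_ ?_)
      · rw [norm_pow, norm_div, hxy, div_self (norm_ne_zero_iff.2 hy), one_pow]
      · rw [norm_neg, hu]
    calc ‖x ^ 2 - u * y ^ 2‖ = ‖y‖ ^ 2 * ‖(x / y) ^ 2 - u‖ := by
          rw [← norm_pow, ← norm_mul]; congr 1; field_simp
      _ = max (‖x‖ ^ 2) (‖y‖ ^ 2) := by rw [hT, hxy, max_self, mul_one]
  · have hne : ‖x ^ 2‖ ≠ ‖-(u * y ^ 2)‖ := by
      rw [norm_neg, huy, norm_pow]
      exact fun h => hxy ((pow_left_inj₀ (norm_nonneg _) (norm_nonneg _) two_ne_zero).1 h)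
    rw [sub_eq_add_neg, add_eq_max_of_ne hne, norm_neg, huy, norm_pow]

theorem norm_intCast_eq_one_iff_ne_zero {u : ℤ} : ‖(u : ℚ_[p])‖ = 1 ↔ (u : ZMod p) ≠ 0 := by
  rw [Ne, ZMod.intCast_zmod_eq_zero_iff_dvd, ← norm_intCast_lt_one_iff,
    (norm_int_le_one u).lt_iff_ne, not_not]

theorem isSquare_intCast_iff_isSquare_zmod (hp : p ≠ 2) {u : ℤ} (hu : (u : ZMod p) ≠ 0) :
    IsSquare (u : ℚ_[p]) ↔ IsSquare (u : ZMod p) := by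
  have hu₁ := norm_intCast_eq_one_iff_ne_zero.2 hu
  constructor
  · rintro ⟨s, hs⟩
    have hs₁ : ‖s‖ ≤ 1 := by
      have : ‖s‖ * ‖s‖ = 1 := by rw [← norm_mul, ← hs, hu₁]
      nlinarith [norm_nonneg s]
    set S : ℤ_[p] := ⟨s, hs₁⟩
    have hS : (u : ℤ_[p]) = S * S := Subtype.ext (by push_cast; exact hs)
    exact ⟨PadicInt.toZMod S, by rw [← map_mul, ← hS, map_intCast]⟩
  · rintro ⟨r, hr⟩
    apply isSquare_of_norm_sq_sub_lt hp (x := ((r.cast : ℤ) : ℚ_[p]))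
    rw [hu₁, ← Int.cast_pow, ← Int.cast_sub, norm_intCast_lt_one_iff,
      ← ZMod.intCast_zmod_eq_zero_iff_dvd]
    push_cast
    rw [hr, sq, sub_self]

theorem isSquare_pow_mul_iff {u : ℚ_[p]} (hu : ‖u‖ = 1) (t : ℕ) :
    IsSquare ((p : ℚ_[p]) ^ t * u) ↔ Even t ∧ IsSquare u := by
  have hp₀ : (p : ℚ_[p]) ≠ 0 := natCast_p_ne_zero
  constructor
  · rintro ⟨s, hs⟩
    obtain ⟨k, rfl | rfl⟩ := Nat.even_or_odd' t
    · refine ⟨even_two_mul k, s / (p : ℚ_[p]) ^ k, ?_⟩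
      field_simp
      rw [sq s, ← hs]
      ring
    · have hu₀ : u ≠ 0 := norm_ne_zero_iff.1 (by rw [hu]; exact one_ne_zero)
      have hs₀ : s ≠ 0 := by
        rintro rfl
        rw [mul_zero] at hs
        exact mul_ne_zero (pow_ne_zero _ hp₀) hu₀ hs
      refine (norm_sq_ne_norm_p_mul_norm_sq hs₀ ((p : ℚ_[p]) ^ k) ?_).elim
      rw [sq, ← norm_mul, ← hs, norm_mul, hu, mul_one, norm_pow, norm_pow]
      ring
  · rintro ⟨⟨k, rfl⟩, r, rfl⟩
    exact ⟨(p : ℚ_[p]) ^ k * r, by ring⟩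

theorem isSquare_intCast_iff (hp : p ≠ 2) {D : ℤ} (hD : D ≠ 0) :
    IsSquare (D : ℚ_[p]) ↔
      Even (padicValInt p D) ∧ legendreSym p (D / (p : ℤ) ^ padicValInt p D) = 1 := by
  set t := padicValInt p D
  set u := D / (p : ℤ) ^ t
  have hDu : (D : ℚ_[p]) = (p : ℚ_[p]) ^ t * u := by
    exact_mod_cast (Int.mul_ediv_cancel' (padicValInt_dvd D)).symm
  have hu : ‖(u : ℚ_[p])‖ = 1 := by
    have h := congrArg norm hDu
    rw [norm_eq_zpow_neg_valuation (Int.cast_ne_zero.2 hD), valuation_intCast, norm_mul,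
      norm_pow, norm_p, zpow_neg, zpow_natCast, inv_pow] at h
    exact (mul_eq_left₀ (by simp [NeZero.ne p])).1 h.symm
  have hu₀ := norm_intCast_eq_one_iff_ne_zero.1 hu
  rw [hDu, isSquare_pow_mul_iff hu, legendreSym.eq_one_iff p hu₀,
    isSquare_intCast_iff_isSquare_zmod hp hu₀]

theorem exists_norm_eq_one_not_isSquare (hp : p ≠ 2) :
    ∃ n : ℚ_[p], ‖n‖ = 1 ∧ ¬IsSquare n := by
  obtain ⟨w, hw⟩ := FiniteField.exists_nonsquare (F := ZMod p) (by rwa [ZMod.ringChar_zmod_n])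
  have hw₀ : ((w.cast : ℤ) : ZMod p) ≠ 0 := by
    rw [ZMod.intCast_zmod_cast]
    rintro rfl
    exact hw ⟨0, by simp⟩
  refine ⟨((w.cast : ℤ) : ℚ_[p]), norm_intCast_eq_one_iff_ne_zero.2 hw₀, ?_⟩
  rwa [isSquare_intCast_iff_isSquare_zmod hp hw₀, ZMod.intCast_zmod_cast]

theorem sq_sub_mul_sq_ne_p (hp : p ≠ 2) {u : ℚ_[p]} (hu : ‖u‖ = 1) (hsq : ¬IsSquare u)
    (x y : ℚ_[p]) : x ^ 2 - u * y ^ 2 ≠ p := by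
  intro h
  have hxy := norm_sq_sub_mul_sq_of_not_isSquare hp hu hsq x y
  rw [h] at hxy
  obtain ⟨z, hz⟩ : ∃ z : ℚ_[p], ‖(p : ℚ_[p])‖ = ‖z‖ ^ 2 := by
    rcases max_choice (‖x‖ ^ 2) (‖y‖ ^ 2) with hm | hm
    exacts [⟨x, hm ▸ hxy⟩, ⟨y, hm ▸ hxy⟩]
  have hz₀ : z ≠ 0 := by
    rintro rfl
    rw [norm_zero, zero_pow two_ne_zero, norm_eq_zero] at hz
    exact natCast_p_ne_zero hz
  exact norm_sq_ne_norm_p_mul_norm_sq hz₀ 1 (by rw [norm_one, one_pow, mul_one, hz])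

theorem sq_sub_p_mul_mul_sq_ne (hp : p ≠ 2) {u n : ℚ_[p]} (hu : ‖u‖ = 1) (hn : ‖n‖ = 1)
    (hsq : ¬IsSquare n) (x y : ℚ_[p]) : x ^ 2 - p * u * y ^ 2 ≠ n := by
  intro h
  have hpy : ‖(p : ℚ_[p]) * u * y ^ 2‖ = ‖(p : ℚ_[p])‖ * ‖y‖ ^ 2 := by
    rw [norm_mul, norm_mul, hu, mul_one, norm_pow]
  rcases lt_trichotomy (‖(p : ℚ_[p])‖ * ‖y‖ ^ 2) 1 with hlt | heq | hgt
  · refine hsq (isSquare_of_norm_sq_sub_lt hp (x := x) ?_)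
    rwa [hn, ← h, sub_sub_cancel, hpy]
  · exact norm_sq_ne_norm_p_mul_norm_sq one_ne_zero y (by rw [norm_one, one_pow, heq])
  · have hx : ‖x‖ ^ 2 = ‖(p : ℚ_[p])‖ * ‖y‖ ^ 2 := by
      rw [← norm_pow, ← hpy, show x ^ 2 = n + p * u * y ^ 2 by rw [← h]; ring,
        add_eq_max_of_ne (by rw [hn, hpy]; exact hgt.ne), hn, hpy, max_eq_right hgt.le]
    have hx₀ : x ≠ 0 := by
      rintro rfl
      rw [norm_zero, zero_pow two_ne_zero] at hx
      linarith
    exact norm_sq_ne_norm_p_mul_norm_sq hx₀ y hx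

theorem exists_forall_sq_sub_mul_sq_ne (hp : p ≠ 2) {D : ℚ_[p]} (hD : ¬IsSquare D) :
    ∃ t : ℚ_[p], ∀ x y, x ^ 2 - D * y ^ 2 ≠ t := by
  have hD₀ : D ≠ 0 := by rintro rfl; exact hD ⟨0, by simp⟩
  obtain ⟨u, hu, hDu⟩ := exists_norm_eq_one_and_eq_zpow_mul hD₀
  obtain ⟨s, hs | hs⟩ := Int.even_or_odd' D.valuation
  · have hD' : D = ((p : ℚ_[p]) ^ s) ^ 2 * u := by
      rw [hDu, hs, mul_comm 2 s, zpow_mul, zpow_ofNat]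
    have hsq : ¬IsSquare u := fun h => hD (hD' ▸ (IsSquare.sq _).mul h)
    refine ⟨p, fun x y => ?_⟩
    rw [show D * y ^ 2 = u * ((p : ℚ_[p]) ^ s * y) ^ 2 by rw [hD']; ring]
    exact sq_sub_mul_sq_ne_p hp hu hsq x _
  · have hD' : D = ((p : ℚ_[p]) ^ s) ^ 2 * (p * u) := by
      rw [hDu, hs, zpow_add_one₀ natCast_p_ne_zero, mul_comm 2 s, zpow_mul, zpow_ofNat]
      ring
    obtain ⟨n, hn, hnsq⟩ := exists_norm_eq_one_not_isSquare hp
    refine ⟨n, fun x y => ?_⟩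
    rw [show D * y ^ 2 = p * u * ((p : ℚ_[p]) ^ s * y) ^ 2 by rw [hD']; ring]
    exact sq_sub_p_mul_mul_sq_ne hp hu hn hnsq x _

theorem not_dense_sq_sub_mul_sq (hp : p ≠ 2) {D : ℚ_[p]} (hD : ¬IsSquare D) :
    ¬Dense {z : ℚ_[p] | ∃ x y, x ^ 2 - D * y ^ 2 = z} := by
  obtain ⟨t, ht⟩ := exists_forall_sq_sub_mul_sq_ne hp hD
  have ht₀ : t ≠ 0 := fun h => ht 0 0 (by simp [h])
  intro hdense
  obtain ⟨_, hq, x, y, rfl⟩ := Metric.dense_iff.1 hdense t ‖t‖ (norm_pos_iff.2 ht₀)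
  rw [Metric.mem_ball, dist_eq_norm] at hq
  obtain ⟨s, hs⟩ := isSquare_div_of_norm_sub_lt hp hq
  have hs₀ : s ≠ 0 := by
    rintro rfl
    rw [mul_zero, div_eq_zero_iff, or_iff_left ht₀] at hs
    simp [hs] at hq
  apply ht (x / s) (y / s)
  rw [div_eq_iff ht₀] at hs
  field_simp
  linear_combination hs

end Padic

theorem stmt14 (p : ℕ) [Fact p.Prime] (hp : p ≠ 2) (a b c : ℤ)
    (hns : b ^ 2 - 4 * a * c ≠ 0) :
    Dense (quotSet {y : ℚ_[p] | ∃ m k : ℤ,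
        ((a * m ^ 2 + b * m * k + c * k ^ 2 : ℤ) : ℚ_[p]) = y}) ↔
    Even (padicValInt p (b ^ 2 - 4 * a * c)) ∧
      legendreSym p ((b ^ 2 - 4 * a * c) / (p : ℤ) ^ padicValInt p (b ^ 2 - 4 * a * c)) = 1 := by
  rw [← Padic.isSquare_intCast_iff hp hns]
  refine ⟨fun hdense => ?_, dense_quotSet_of_isSquare_discrim (Padic.denseRange_ratCast p) hns⟩
  by_contra hsq
  have ha : a ≠ 0 := by
    rintro rfl
    exact hsq ⟨b, by push_cast; ring⟩
  exact Padic.not_dense_sq_sub_mul_sq hp hsq (hdense.mono (quotSet_subset_sq_sub_mul_sq ha))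
end

section
/- Let Q = aX₁² + bX₁X₂ + cX₂² ∈ ℤ[X₁, X₂] be a nonsingular binary quadratic form. Then R(Q(ℤ²)) is dense in ℚ₂ if and only if ν₂(b² − 4ac) is even and 2^{−ν₂(b²−4ac)}(b² − 4ac) ≡ 1 (mod 8). -/
open Set

def normValues {K : Type*} [CommRing K] (D : K) : Set K :=
  {t | ∃ x y : K, x ^ 2 - D * y ^ 2 = t}

section NormValues

variable {K : Type*} [Field K] {D : K}

theorem sq_mem_normValues (w : K) : w ^ 2 ∈ normValues D := ⟨w, 0, by ring⟩

theorem mul_mem_normValues {s t : K} (hs : s ∈ normValues D) (ht : t ∈ normValues D) :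
    s * t ∈ normValues D := by
  obtain ⟨x, y, rfl⟩ := hs
  obtain ⟨x', y', rfl⟩ := ht
  exact ⟨x * x' + D * y * y', x * y' + x' * y, by ring⟩

theorem inv_mem_normValues {t : K} (ht : t ∈ normValues D) : t⁻¹ ∈ normValues D := by
  have : t⁻¹ = t * t⁻¹ ^ 2 := by
    rcases eq_or_ne t 0 with rfl | h0
    · simp
    · field_simp
  rw [this]
  exact mul_mem_normValues ht (sq_mem_normValues _)

theorem div_mem_normValues {s t : K} (hs : s ∈ normValues D) (ht : t ∈ normValues D) :
    s / t ∈ normValues D := by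
  rw [div_eq_mul_inv]
  exact mul_mem_normValues hs (inv_mem_normValues ht)

theorem normValues_mul_sq_subset (w : K) : normValues (w ^ 2 * D) ⊆ normValues D := by
  rintro _ ⟨x, y, rfl⟩
  exact ⟨x, w * y, by ring⟩

variable [CharZero K]

theorem mem_normValues_sq {δ : K} (hδ : δ ≠ 0) (t : K) : t ∈ normValues (δ ^ 2) :=
  ⟨(t + 1) / 2, (t - 1) / (2 * δ), by field_simp; ring⟩

theorem quadratic_div_mem_normValues {a b c : K} (ha : a ≠ 0) (m k m' k' : K) :
    (a * m ^ 2 + b * m * k + c * k ^ 2) / (a * m' ^ 2 + b * m' * k' + c * k' ^ 2) ∈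
      normValues (b ^ 2 - 4 * a * c) := by
  have h4a : (4 : K) * a ≠ 0 := mul_ne_zero (by norm_num) ha
  -- completing the square
  have hQ : ∀ m k : K,
      4 * a * (a * m ^ 2 + b * m * k + c * k ^ 2) ∈ normValues (b ^ 2 - 4 * a * c) :=
    fun m k => ⟨2 * a * m + b * k, k, by ring⟩
  rw [← mul_div_mul_left _ _ h4a]
  exact div_mem_normValues (hQ m k) (hQ m' k')

theorem exists_quadratic_eq {a b c δ : K} (hδ : δ ≠ 0) (hD : b ^ 2 - 4 * a * c = δ ^ 2) (t : K) :
    ∃ x y : K, a * x ^ 2 + b * x * y + c * y ^ 2 = t := by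
  rcases eq_or_ne a 0 with rfl | ha
  · have hb : b ≠ 0 := by rintro rfl; exact hδ (by simpa using hD.symm)
    exact ⟨(t - c) / b, 1, by field_simp; ring⟩
  · -- `4a·Q = L₁L₂` with `L₁ = 2ax + (b - δ)y`, `L₂ = 2ax + (b + δ)y`; solve `L₁ = 1`, `L₂ = 4at`
    obtain ⟨y, hy⟩ : ∃ y, 2 * δ * y = 4 * a * t - 1 :=
      ⟨(4 * a * t - 1) / (2 * δ), by field_simp⟩
    obtain ⟨x, hx⟩ : ∃ x, 2 * a * x = 1 - (b - δ) * y :=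
      ⟨(1 - (b - δ) * y) / (2 * a), by field_simp⟩
    refine ⟨x, y, mul_left_cancel₀ (mul_ne_zero (by norm_num) ha : (4 : K) * a ≠ 0) ?_⟩
    linear_combination (2 * a * x + b * y + 1 + δ * y) * hx - y ^ 2 * hD + hy

end NormValues

section Padic

variable {p : ℕ} [Fact p.Prime]

open Polynomial in
theorem Padic.isSquare_of_norm_sub_one_lt {x : ℚ_[p]} (hx : ‖x - 1‖ < ‖(2 : ℚ_[p])‖ ^ 2) :
    IsSquare x := by
  have h2 : ‖(2 : ℚ_[p])‖ ≤ 1 := by exact_mod_cast Padic.norm_int_le_one 2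
  have hx1 : ‖x‖ ≤ 1 := by
    have := Padic.nonarchimedean (x - 1) 1
    rw [sub_add_cancel, norm_one] at this
    exact this.trans (max_le (hx.le.trans (pow_le_one₀ (norm_nonneg _) h2)) le_rfl)
  set u : ℤ_[p] := ⟨x, hx1⟩
  obtain ⟨z, hz, -⟩ := hensels_lemma (p := p) (F := X ^ 2 - C u) (a := 1) (by
    simp only [map_sub, map_pow, aeval_X, aeval_C, derivative_X_pow, derivative_C, one_pow,
      Algebra.algebraMap_self, RingHom.id_apply, map_mul, sub_zero, mul_one, Nat.cast_ofNat]
    rwa [norm_sub_rev])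
  have hzu : z * z = u := by simpa [sub_eq_zero, sq] using hz
  exact ⟨z, congrArg Subtype.val hzu.symm⟩

theorem Padic.isSquare_div_of_norm_sub_lt_s15 {q t : ℚ_[p]} (ht : t ≠ 0)
    (h : ‖q - t‖ < ‖t‖ * ‖(2 : ℚ_[p])‖ ^ 2) : IsSquare (q / t) := by
  refine Padic.isSquare_of_norm_sub_one_lt ?_
  rwa [← div_self ht, ← sub_div, norm_div, div_lt_iff₀' (norm_pos_iff.mpr ht)]

theorem notMem_closure_normValues {D t : ℚ_[p]} (ht0 : t ≠ 0) (ht : t ∉ normValues D) :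
    t ∉ closure (normValues D) := by
  intro hcl
  have h2 : 0 < ‖(2 : ℚ_[p])‖ := norm_pos_iff.mpr two_ne_zero
  have hr : 0 < ‖t‖ * ‖(2 : ℚ_[p])‖ ^ 2 := by positivity
  obtain ⟨q, hq, hqt⟩ := Metric.mem_closure_iff.mp hcl _ hr
  rw [dist_comm, dist_eq_norm] at hqt
  obtain ⟨w, hw⟩ := Padic.isSquare_div_of_norm_sub_lt_s15 ht0 hqt
  have hq0 : q ≠ 0 := by
    rintro rfl
    have h2le : ‖(2 : ℚ_[p])‖ ^ 2 ≤ 1 :=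
      pow_le_one₀ h2.le (by exact_mod_cast Padic.norm_int_le_one 2)
    rw [zero_sub, norm_neg] at hqt
    nlinarith [norm_pos_iff.mpr ht0]
  refine ht ?_
  have : t = q * w⁻¹ ^ 2 := by
    rw [inv_pow, sq, ← hw, ← div_eq_mul_inv, div_div_cancel₀ hq0]
  rw [this]
  exact mul_mem_normValues hq (sq_mem_normValues _)

theorem Padic.mem_closure_range_intCast {x : ℚ_[p]} (hx : ‖x‖ ≤ 1) :
    x ∈ closure (range ((↑) : ℤ → ℚ_[p])) := by
  have hc : Continuous ((↑) : ℤ_[p] → ℚ_[p]) := continuous_subtype_val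
  refine closure_mono ?_
    (mem_closure_image hc.continuousAt (PadicInt.denseRange_intCast (p := p) ⟨x, hx⟩))
  rintro _ ⟨_, ⟨n, rfl⟩, rfl⟩
  exact ⟨n, rfl⟩

theorem Padic.exists_pow_mul_norm_le_one (M : ℝ) :
    ∃ N : ℕ, ∀ x : ℚ_[p], ‖x‖ ≤ M → ‖(p : ℚ_[p]) ^ N * x‖ ≤ 1 := by
  have hp : (1 : ℝ) < p := Nat.one_lt_cast.mpr (Fact.out : p.Prime).one_lt
  obtain ⟨N, hN⟩ := pow_unbounded_of_one_lt M hp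
  refine ⟨N, fun x hx => ?_⟩
  rw [norm_mul, norm_pow, Padic.norm_p, inv_pow, inv_mul_le_iff₀ (by positivity), mul_one]
  exact hx.trans hN.le

end Padic

theorem div_mem_closure_quotSet {K : Type*} [DivisionRing K] [TopologicalSpace K]
    [IsTopologicalDivisionRing K] [T1Space K] {A : Set K} {u v : K} (hu : u ∈ closure A)
    (hv : v ∈ closure A) (hv0 : v ≠ 0) : u / v ∈ closure (quotSet A) := by
  have huv : (u, v) ∈ closure ({w : K × K | w.2 ≠ 0} ∩ A ×ˢ A) :=
    (isOpen_ne.preimage (continuous_snd : Continuous (Prod.snd : K × K → K))).inter_closure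
      ⟨hv0, by rw [closure_prod_eq]; exact ⟨hu, hv⟩⟩
  refine closure_mono ?_ (mem_closure_image (f := fun w : K × K => w.1 / w.2)
    (continuousAt_fst.div continuousAt_snd hv0) huv)
  rintro _ ⟨⟨a, b⟩, ⟨hb0, ha, hb⟩, rfl⟩
  exact ⟨a, ha, b, hb, hb0, rfl⟩

section QuadraticForm

variable {p : ℕ} [Fact p.Prime] {a b c : ℤ}

theorem quadratic_mem_closure_range {x y : ℚ_[p]} (hx : ‖x‖ ≤ 1) (hy : ‖y‖ ≤ 1) :
    a * x ^ 2 + b * x * y + c * y ^ 2 ∈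
      closure {t : ℚ_[p] | ∃ m k : ℤ, ((a * m ^ 2 + b * m * k + c * k ^ 2 : ℤ) : ℚ_[p]) = t} := by
  have hxy : (x, y) ∈ closure (range ((↑) : ℤ → ℚ_[p]) ×ˢ range ((↑) : ℤ → ℚ_[p])) := by
    rw [closure_prod_eq]
    exact ⟨Padic.mem_closure_range_intCast hx, Padic.mem_closure_range_intCast hy⟩
  have hQ : Continuous fun w : ℚ_[p] × ℚ_[p] => a * w.1 ^ 2 + b * w.1 * w.2 + c * w.2 ^ 2 := by
    fun_prop
  refine closure_mono ?_ (mem_closure_image (x := (x, y)) hQ.continuousAt hxy)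
  rintro _ ⟨⟨_, _⟩, ⟨⟨m, rfl⟩, ⟨k, rfl⟩⟩, rfl⟩
  exact ⟨m, k, by push_cast; rfl⟩

theorem dense_quotSet_of_isSquare (hD : b ^ 2 - 4 * a * c ≠ 0)
    (hsq : IsSquare ((b ^ 2 - 4 * a * c : ℤ) : ℚ_[p])) :
    Dense (quotSet {t : ℚ_[p] | ∃ m k : ℤ,
      ((a * m ^ 2 + b * m * k + c * k ^ 2 : ℤ) : ℚ_[p]) = t}) := by
  obtain ⟨δ, hδ⟩ := hsq
  have hδ0 : δ ≠ 0 := by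
    rintro rfl
    exact hD (by exact_mod_cast hδ.trans (mul_zero 0))
  have hδ2 : (b : ℚ_[p]) ^ 2 - 4 * a * c = δ ^ 2 := by rw [sq δ, ← hδ]; push_cast; ring
  intro t
  -- over `ℚ_[p]` the form is isotropic, hence represents `t` and `1`; rescale into `ℤ_[p]`
  obtain ⟨x, y, hxy⟩ := exists_quadratic_eq hδ0 hδ2 t
  obtain ⟨x', y', hxy'⟩ := exists_quadratic_eq hδ0 hδ2 1
  obtain ⟨N, hN⟩ :=
    Padic.exists_pow_mul_norm_le_one (p := p) (max (max ‖x‖ ‖y‖) (max ‖x'‖ ‖y'‖))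
  set s : ℚ_[p] := (p : ℚ_[p]) ^ N
  have hs : s ≠ 0 := pow_ne_zero _ (Nat.cast_ne_zero.mpr (Fact.out : p.Prime).ne_zero)
  have hscale : ∀ x y : ℚ_[p], a * (s * x) ^ 2 + b * (s * x) * (s * y) + c * (s * y) ^ 2 =
      s ^ 2 * (a * x ^ 2 + b * x * y + c * y ^ 2) := fun x y => by ring
  have ht : t = (a * (s * x) ^ 2 + b * (s * x) * (s * y) + c * (s * y) ^ 2) /
      (a * (s * x') ^ 2 + b * (s * x') * (s * y') + c * (s * y') ^ 2) := by
    rw [hscale, hscale, hxy, hxy', mul_one, mul_div_cancel_left₀ _ (pow_ne_zero 2 hs)]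
  rw [ht]
  refine div_mem_closure_quotSet (quadratic_mem_closure_range (hN _ ?_) (hN _ ?_))
    (quadratic_mem_closure_range (hN _ ?_) (hN _ ?_)) ?_
  · exact le_max_of_le_left (le_max_left _ _)
  · exact le_max_of_le_left (le_max_right _ _)
  · exact le_max_of_le_right (le_max_left _ _)
  · exact le_max_of_le_right (le_max_right _ _)
  · rw [hscale, hxy', mul_one]
    exact pow_ne_zero 2 hs

end QuadraticForm

theorem notMem_normValues_of_zmod8 {d t : ℤ}
    (h : ∀ X Y Z : ZMod 8, (X = 1 ∨ Y = 1 ∨ Z = 1) → X ^ 2 - d * Y ^ 2 ≠ t * Z ^ 2) :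
    (t : ℚ_[2]) ∉ normValues (d : ℚ_[2]) := by
  classical
  rintro ⟨x, y, hxy⟩
  -- dividing by the coordinate of largest norm among `x, y, 1` gives a primitive integral solution
  obtain ⟨w, hw, hmax⟩ := ({x, y, 1} : Finset ℚ_[2]).exists_max_image norm ⟨1, by simp⟩
  have hw1 : 1 ≤ ‖w‖ := by simpa using hmax 1 (by simp)
  have hw0 : w ≠ 0 := norm_pos_iff.mp (one_pos.trans_le hw1)
  have hint : ∀ z ∈ ({x, y, 1} : Finset ℚ_[2]), ‖z / w‖ ≤ 1 := fun z hz => by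
    rw [norm_div, div_le_one (one_pos.trans_le hw1)]
    exact hmax z hz
  set X : ℤ_[2] := ⟨x / w, hint x (by simp)⟩
  set Y : ℤ_[2] := ⟨y / w, hint y (by simp)⟩
  set Z : ℤ_[2] := ⟨1 / w, hint 1 (by simp)⟩
  have hXYZ : X ^ 2 - d * Y ^ 2 = t * Z ^ 2 := by
    apply Subtype.ext
    change (x / w) ^ 2 - d * (y / w) ^ 2 = t * (1 / w) ^ 2
    rw [← hxy]
    ring
  have hone : X = 1 ∨ Y = 1 ∨ Z = 1 := by
    simp only [Finset.mem_insert, Finset.mem_singleton] at hw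
    rcases hw with rfl | rfl | rfl
    · exact Or.inl (Subtype.ext (div_self hw0))
    · exact Or.inr (Or.inl (Subtype.ext (div_self hw0)))
    · exact Or.inr (Or.inr (Subtype.ext (div_one 1)))
  refine h (PadicInt.toZModPow 3 X) (PadicInt.toZModPow 3 Y) (PadicInt.toZModPow 3 Z) ?_ ?_
  · rcases hone with h1 | h1 | h1 <;> simp [h1]
  · simpa using congrArg (PadicInt.toZModPow 3) hXYZ

theorem exists_int_notMem_normValues {d : ℤ}
    (hd : d % 8 = 2 ∨ d % 8 = 3 ∨ d % 8 = 5 ∨ d % 8 = 6 ∨ d % 8 = 7) :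
    ∃ t : ℤ, t ≠ 0 ∧ (t : ℚ_[2]) ∉ normValues (d : ℚ_[2]) := by
  have hd8 : (d : ZMod 8) = ((d % 8 : ℤ) : ZMod 8) := (ZMod.intCast_mod d 8).symm
  rcases hd with h | h | h | h | h <;> rw [h] at hd8
  · exact ⟨5, by norm_num, notMem_normValues_of_zmod8 (by rw [hd8]; decide)⟩
  · exact ⟨3, by norm_num, notMem_normValues_of_zmod8 (by rw [hd8]; decide)⟩
  · exact ⟨2, by norm_num, notMem_normValues_of_zmod8 (by rw [hd8]; decide)⟩
  · exact ⟨5, by norm_num, notMem_normValues_of_zmod8 (by rw [hd8]; decide)⟩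
  · exact ⟨3, by norm_num, notMem_normValues_of_zmod8 (by rw [hd8]; decide)⟩

theorem eq_two_pow_padicValInt_mul_odd {D : ℤ} (hD : D ≠ 0) :
    D = 2 ^ padicValInt 2 D * (D / 2 ^ padicValInt 2 D) ∧ D / 2 ^ padicValInt 2 D % 2 = 1 := by
  have hdvd : (2 : ℤ) ^ padicValInt 2 D ∣ D := by exact_mod_cast padicValInt_dvd (p := 2) D
  have hD' := (Int.mul_ediv_cancel' hdvd).symm
  refine ⟨hD', Int.emod_two_ne_zero.mp fun h => ?_⟩
  obtain ⟨w, hw⟩ := Int.dvd_of_emod_eq_zero h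
  have : (2 : ℤ) ^ (padicValInt 2 D + 1) ∣ D :=
    ⟨w, by rw [pow_succ]; linear_combination hD' + 2 ^ padicValInt 2 D * hw⟩
  rw [show (2 : ℤ) = ((2 : ℕ) : ℤ) by norm_num, padicValInt_dvd_iff] at this
  omega

theorem isSquare_of_even_padicValInt {D : ℤ}
    (h : Even (padicValInt 2 D) ∧ D / 2 ^ padicValInt 2 D % 8 = 1) : IsSquare (D : ℚ_[2]) := by
  obtain ⟨⟨e, he⟩, hu⟩ := h
  have hdvd : (2 : ℤ) ^ padicValInt 2 D ∣ D := by exact_mod_cast padicValInt_dvd (p := 2) D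
  set u := D / 2 ^ padicValInt 2 D
  have hD : (D : ℚ_[2]) = ((2 : ℚ_[2]) ^ e) ^ 2 * u := by
    rw [← pow_mul, mul_two, ← he]
    exact_mod_cast (Int.mul_ediv_cancel' hdvd).symm
  rw [hD]
  refine (IsSquare.sq _).mul (Padic.isSquare_of_norm_sub_one_lt ?_)
  have h2 : ‖(2 : ℚ_[2])‖ = 2⁻¹ := by simpa using Padic.norm_p (p := 2)
  obtain ⟨k, hk⟩ : ∃ k, u = 1 + 8 * k := ⟨u / 8, by omega⟩
  have h8k : (u : ℚ_[2]) - 1 = 2 ^ 3 * k := by rw [hk]; push_cast; ring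
  rw [h8k, norm_mul, norm_pow, h2]
  calc (2⁻¹ : ℝ) ^ 3 * ‖(k : ℚ_[2])‖ ≤ 2⁻¹ ^ 3 * 1 := by gcongr; exact Padic.norm_int_le_one k
    _ < 2⁻¹ ^ 2 := by norm_num

theorem exists_notMem_normValues {D : ℤ} (hD : D ≠ 0)
    (h : ¬(Even (padicValInt 2 D) ∧ D / 2 ^ padicValInt 2 D % 8 = 1)) :
    ∃ t : ℚ_[2], t ≠ 0 ∧ t ∉ normValues (D : ℚ_[2]) := by
  obtain ⟨hDu, hu⟩ := eq_two_pow_padicValInt_mul_odd hD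
  set v := padicValInt 2 D
  set u := D / 2 ^ v
  obtain ⟨e, d, hDd, hd⟩ : ∃ (e : ℕ) (d : ℤ), D = (2 ^ e) ^ 2 * d ∧
      (d % 8 = 2 ∨ d % 8 = 3 ∨ d % 8 = 5 ∨ d % 8 = 6 ∨ d % 8 = 7) := by
    obtain ⟨e, he | he⟩ := Nat.even_or_odd' v
    · have hu8 : u % 8 ≠ 1 := fun hu8 => h ⟨⟨e, by omega⟩, hu8⟩
      exact ⟨e, u, by rw [hDu, he]; ring, by omega⟩
    · exact ⟨e, 2 * u, by rw [hDu, he]; ring, by omega⟩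
  obtain ⟨t, ht0, ht⟩ := exists_int_notMem_normValues hd
  refine ⟨t, Int.cast_ne_zero.mpr ht0, fun hmem => ht (normValues_mul_sq_subset (2 ^ e) ?_)⟩
  rwa [hDd, Int.cast_mul, Int.cast_pow, Int.cast_pow, Int.cast_ofNat] at hmem

theorem stmt15 (a b c : ℤ) (hns : b ^ 2 - 4 * a * c ≠ 0) :
    Dense (quotSet {y : ℚ_[2] | ∃ m k : ℤ,
        ((a * m ^ 2 + b * m * k + c * k ^ 2 : ℤ) : ℚ_[2]) = y}) ↔
    Even (padicValInt 2 (b ^ 2 - 4 * a * c)) ∧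
      (b ^ 2 - 4 * a * c) / 2 ^ padicValInt 2 (b ^ 2 - 4 * a * c) % 8 = 1 := by
  refine ⟨fun hdense => ?_,
    fun h => dense_quotSet_of_isSquare hns (isSquare_of_even_padicValInt h)⟩
  by_contra h
  obtain ⟨t, ht0, ht⟩ := exists_notMem_normValues hns h
  rcases eq_or_ne a 0 with rfl | ha
  · have hb : (b : ℚ_[2]) ≠ 0 := Int.cast_ne_zero.mpr (by rintro rfl; simp at hns)
    exact ht (by simpa using mem_normValues_sq hb t)
  · refine notMem_closure_normValues ht0 ht (closure_mono ?_ (hdense t))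
    rintro _ ⟨_, ⟨m, k, rfl⟩, _, ⟨m', k', rfl⟩, -, rfl⟩
    push_cast
    exact quadratic_div_mem_normValues (Int.cast_ne_zero.mpr ha) _ _ _ _
end
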